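/- Let n ≥ 1, let ω ∈ ℝⁿ \ ℚⁿ be nonresonant with periods T_i = T_i(ω), and for each i let w_i ∈ ℤⁿ be a best-approximation numerator, i.e. |T_i·ω − w_i| = ‖T_i·ω‖_ℤ. Let k ∈ ℤⁿ be nonzero and let i ≥ 1 be an index such that T_{i−1} divides ⟨k, w_{i−1}⟩ while T_i does not divide ⟨k, w_i⟩. Then the Euclidean norm of k satisfies ‖k‖ ≥ T_{i−1} / (2·√n · T_i^{1 − 1/n}). -/

import Mathlib

/-!
Send `ω` to the point `θ` of the torus `(ℝ/ℤ)ⁿ`; then `distZ (T • ω) = ‖T • θ‖` for the sup norm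
of the torus. Write `T' = T_{i-1}`, `T = T_i`, `δ' = ‖T' • θ‖`, `u = w_{i-1}`, `v = w_i`.
The integer `T⟨k,u⟩ - T'⟨k,v⟩` is a nonzero multiple of `T'`, and it equals `⟨k, x⟩` for
`x = T'(Tω - v) - T(T'ω - u)`, whose coordinates are at most `(T + T')δ' ≤ 2Tδ'`; by
Cauchy–Schwarz, `T' ≤ 2√n ‖k‖ Tδ'`. By minimality of `T`, the points `a • θ` with `0 ≤ a < T`
are `δ'`-separated, so the balls of radius `δ'/2` around them are disjoint and `T δ'ⁿ ≤ 1`,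
that is `Tδ' ≤ T^{1-1/n}`.
-/

open Finset

/-- Sup norm on `ℝⁿ`. -/
noncomputable def supNorm {n : ℕ} (x : Fin n → ℝ) : ℝ := ⨆ i, |x i|

/-- Sup-norm distance from `x ∈ ℝⁿ` to the lattice `ℤⁿ`. -/
noncomputable def distZ {n : ℕ} (x : Fin n → ℝ) : ℝ :=
  sInf {r : ℝ | ∃ k : Fin n → ℤ, r = supNorm (fun i => x i - k i)}

/-- Distance from a real number to `ℤ`. -/
noncomputable def distZ1 (t : ℝ) : ℝ := sInf {r : ℝ | ∃ m : ℤ, r = |t - m|}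

/-- `ω ∈ ℚⁿ`. -/
def IsRationalVec {n : ℕ} (ω : Fin n → ℝ) : Prop := ∀ i, ∃ q : ℚ, (q : ℝ) = ω i

/-- `ω` is resonant: some nonzero integer vector `k` has `⟨k, ω⟩ ∈ ℤ`. -/
def Resonant {n : ℕ} (ω : Fin n → ℝ) : Prop :=
  ∃ k : Fin n → ℤ, k ≠ 0 ∧ ∃ m : ℤ, ∑ i, (k i : ℝ) * ω i = (m : ℝ)

/-- The sequence of periods of `ω`. -/
noncomputable def periods {n : ℕ} (ω : Fin n → ℝ) : ℕ → ℕ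
  | 0 => 1
  | i + 1 => sInf {T : ℕ | 1 ≤ T ∧
      distZ (fun j => (T : ℝ) * ω j) < distZ (fun j => (periods ω i : ℝ) * ω j)}

/-- The resonance module of `ω`, as a subgroup of `ℤⁿ`. -/
def resModule {n : ℕ} (ω : Fin n → ℝ) : AddSubgroup (Fin n → ℤ) where
  carrier := {k | ∃ m : ℤ, ∑ i, (k i : ℝ) * ω i = (m : ℝ)}
  zero_mem' := ⟨0, by simp⟩
  add_mem' := by
    rintro a b ⟨ma, ha⟩ ⟨mb, hb⟩
    refine ⟨ma + mb, ?_⟩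
    push_cast
    simp only [Pi.add_apply, Int.cast_add, add_mul, Finset.sum_add_distrib, ha, hb]
  neg_mem' := by
    rintro a ⟨m, hm⟩
    refine ⟨-m, ?_⟩
    push_cast
    simp [neg_mul, Finset.sum_neg_distrib, hm]

lemma exists_pos_norm_nsmul_lt {G : Type*} [SeminormedAddCommGroup G] [CompactSpace G] (θ : G)
    {ε : ℝ} (hε : 0 < ε) : ∃ d : ℕ, 0 < d ∧ ‖d • θ‖ < ε := by
  obtain ⟨a, φ, hφ, hlim⟩ := CompactSpace.tendsto_subseq fun m : ℕ => m • θ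
  obtain ⟨N, hN⟩ := Metric.cauchySeq_iff'.1 hlim.cauchySeq ε hε
  refine ⟨φ (N + 1) - φ N, Nat.sub_pos_of_lt (hφ N.lt_succ_self), ?_⟩
  rw [sub_nsmul _ (hφ N.lt_succ_self).le, ← sub_eq_add_neg, ← dist_eq_norm]
  exact hN (N + 1) N.le_succ

lemma le_abs_mul_sub_mul_of_dvd_of_not_dvd {a b c d : ℤ} (hc : 0 ≤ c) (ha : c ∣ a)
    (hb : ¬ d ∣ b) : c ≤ |d * a - c * b| := by
  obtain ⟨e, rfl⟩ := ha
  have hne : d * e - b ≠ 0 := fun h => hb ⟨e, by linarith⟩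
  calc c = c * 1 := (mul_one c).symm
    _ ≤ c * |d * e - b| := by gcongr; exact Int.one_le_abs hne
    _ = |d * (c * e) - c * b| := by rw [← abs_of_nonneg hc, ← abs_mul, abs_of_nonneg hc]; ring_nf

lemma abs_sum_mul_le_sqrt_mul_sqrt_card_mul {ι : Type*} [Fintype ι] (a b : ι → ℝ) {C : ℝ}
    (hb : ∀ j, |b j| ≤ C) :
    |∑ j, a j * b j| ≤ √(∑ j, a j ^ 2) * (√(Fintype.card ι) * C) := by
  rcases isEmpty_or_nonempty ι with hι | hι
  · simp
  have hC : 0 ≤ C := (abs_nonneg _).trans (hb (Classical.arbitrary ι))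
  have hb2 : ∑ j, b j ^ 2 ≤ Fintype.card ι * C ^ 2 := by
    simpa using Finset.sum_le_sum fun j (_ : j ∈ Finset.univ) =>
      (sq_abs (b j)).symm.trans_le (pow_le_pow_left₀ (abs_nonneg _) (hb j) 2)
  calc |∑ j, a j * b j| ≤ √((∑ j, a j ^ 2) * ∑ j, b j ^ 2) :=
        Real.abs_le_sqrt (Finset.sum_mul_sq_le_sq_mul_sq _ _ _)
    _ ≤ √((∑ j, a j ^ 2) * (Fintype.card ι * C ^ 2)) := by gcongr
    _ = √(∑ j, a j ^ 2) * (√(Fintype.card ι) * C) := by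
        rw [Real.sqrt_mul (by positivity), Real.sqrt_mul (by positivity), Real.sqrt_sq hC]

lemma natCast_le_sqrt_sum_sq_mul_of_dvd_of_not_dvd {n : ℕ} (ω : Fin n → ℝ) (k u v : Fin n → ℤ)
    {T' T : ℕ} {δ : ℝ} (hu : ∀ j, |T' * ω j - u j| ≤ δ) (hv : ∀ j, |T * ω j - v j| ≤ δ)
    (hdvd : (T' : ℤ) ∣ ∑ j, k j * u j) (hndvd : ¬ (T : ℤ) ∣ ∑ j, k j * v j) :
    (T' : ℝ) ≤ √(∑ j, (k j : ℝ) ^ 2) * (√n * ((T + T') * δ)) := by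
  set x : Fin n → ℝ := fun j => T' * (T * ω j - v j) - T * (T' * ω j - u j)
  have hsum : ∑ j, (k j : ℝ) * x j = ((T * ∑ j, k j * u j - T' * ∑ j, k j * v j : ℤ) : ℝ) := by
    push_cast
    rw [Finset.mul_sum, Finset.mul_sum, ← Finset.sum_sub_distrib]
    exact Finset.sum_congr rfl fun j _ => by simp only [x]; ring
  have hx : ∀ j, |x j| ≤ (T + T') * δ := fun j =>
    calc |x j| ≤ T' * |T * ω j - v j| + T * |T' * ω j - u j| := by
          simpa [abs_mul] using abs_sub (T' * (T * ω j - v j)) (T * (T' * ω j - u j))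
      _ ≤ (T + T') * δ := by nlinarith [hu j, hv j]
  calc (T' : ℝ) ≤ |((T * ∑ j, k j * u j - T' * ∑ j, k j * v j : ℤ) : ℝ)| := by
        exact_mod_cast le_abs_mul_sub_mul_of_dvd_of_not_dvd (Int.natCast_nonneg T') hdvd hndvd
    _ ≤ √(∑ j, (k j : ℝ) ^ 2) * (√n * ((T + T') * δ)) := by
        simpa [hsum] using abs_sum_mul_le_sqrt_mul_sqrt_card_mul (fun j => (k j : ℝ)) x hx

lemma mul_le_rpow_one_sub_inv_of_mul_pow_le_one {T δ : ℝ} {n : ℕ} (hT : 0 < T) (hδ : 0 ≤ δ)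
    (hn : n ≠ 0) (h : T * δ ^ n ≤ 1) : T * δ ≤ T ^ (1 - 1 / (n : ℝ)) := by
  have hδT : δ ≤ T⁻¹ ^ (n : ℝ)⁻¹ := by
    rw [Real.le_rpow_inv_iff_of_pos hδ (inv_nonneg.2 hT.le) (by positivity), Real.rpow_natCast,
      ← one_div, le_div_iff₀' hT]
    exact h
  calc T * δ ≤ T * T⁻¹ ^ (n : ℝ)⁻¹ := by gcongr
    _ = T ^ (1 - 1 / (n : ℝ)) := by
      rw [Real.rpow_sub hT, Real.rpow_one, Real.inv_rpow hT.le, one_div, div_eq_mul_inv]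

section Torus
variable {n : ℕ}

def toTorus (x : Fin n → ℝ) : Fin n → UnitAddCircle := fun j => (x j : UnitAddCircle)

lemma supNorm_eq_norm (x : Fin n → ℝ) : supNorm x = ‖x‖ := by
  cases isEmpty_or_nonempty (α := Fin n)
  · simp [supNorm, Subsingleton.elim x 0]
  · refine le_antisymm (ciSup_le fun j => ?_) ((pi_norm_le_iff_of_nonneg ?_).2 fun j => ?_)
    · exact norm_le_pi_norm x j
    · exact Real.iSup_nonneg fun j => abs_nonneg (x j)
    · exact le_ciSup (f := fun i => |x i|) (Set.finite_range _).bddAbove j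

lemma distZ_eq_norm_toTorus (x : Fin n → ℝ) : distZ x = ‖toTorus x‖ := by
  have hle : ∀ k : Fin n → ℤ, ‖toTorus x‖ ≤ supNorm (fun j => x j - k j) := by
    intro k
    rw [supNorm_eq_norm, pi_norm_le_iff_of_nonneg (norm_nonneg _)]
    intro j
    calc ‖toTorus x j‖ = ‖((x j - k j : ℝ) : UnitAddCircle)‖ := by
          have hk : ((k j : ℝ) : UnitAddCircle) = 0 := (AddCircle.coe_eq_zero_iff 1).2 ⟨k j, by simp⟩
          rw [AddCircle.coe_sub, hk, sub_zero]
          rfl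
      _ ≤ ‖x j - k j‖ := QuotientAddGroup.norm_mk_le_norm
      _ ≤ ‖fun j => x j - k j‖ := norm_le_pi_norm (fun j => x j - k j) j
  have hround : supNorm (fun j => x j - round (x j)) ≤ ‖toTorus x‖ := by
    rw [supNorm_eq_norm, pi_norm_le_iff_of_nonneg (norm_nonneg _)]
    intro j
    rw [Real.norm_eq_abs, ← UnitAddCircle.norm_eq]
    exact norm_le_pi_norm (toTorus x) j
  have hbdd : BddBelow {r : ℝ | ∃ k : Fin n → ℤ, r = supNorm (fun i => x i - k i)} := by
    refine ⟨0, ?_⟩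
    rintro r ⟨k, rfl⟩
    exact (norm_nonneg _).trans (hle k)
  refine le_antisymm ((csInf_le hbdd ⟨fun j => round (x j), rfl⟩).trans hround)
    (le_csInf ⟨_, 0, rfl⟩ ?_)
  rintro r ⟨k, rfl⟩
  exact hle k

lemma toTorus_natCast_mul (T : ℕ) (ω : Fin n → ℝ) :
    toTorus (fun j => (T : ℝ) * ω j) = T • toTorus ω := by
  ext j
  simp [toTorus, ← nsmul_eq_mul]

lemma distZ_natCast_mul_eq_norm_nsmul (T : ℕ) (ω : Fin n → ℝ) :
    distZ (fun j => (T : ℝ) * ω j) = ‖T • toTorus ω‖ := by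
  rw [distZ_eq_norm_toTorus, toTorus_natCast_mul]

lemma abs_natCast_mul_sub_le_of_supNorm_eq {ω : Fin n → ℝ} {T : ℕ} {u : Fin n → ℤ}
    (h : supNorm (fun j => (T : ℝ) * ω j - u j) = distZ (fun j => (T : ℝ) * ω j)) (j : Fin n) :
    |T * ω j - u j| ≤ ‖T • toTorus ω‖ := by
  rw [← distZ_natCast_mul_eq_norm_nsmul, ← h, supNorm_eq_norm]
  exact norm_le_pi_norm (fun j => (T : ℝ) * ω j - u j) j

lemma norm_nsmul_toTorus_pos {ω : Fin n → ℝ} (hω : ¬ IsRationalVec ω) {T : ℕ} (hT : T ≠ 0) :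
    0 < ‖T • toTorus ω‖ := by
  refine norm_pos_iff.2 fun h => hω fun j => ?_
  obtain ⟨m, hm⟩ := (AddCircle.coe_eq_zero_iff 1).1 (congrFun h j)
  exact ⟨m / T, by push_cast; field_simp; simpa [mul_comm] using hm⟩

lemma norm_pi_unitAddCircle_le_one (x : Fin n → UnitAddCircle) : ‖x‖ ≤ 1 := by
  refine (pi_norm_le_iff_of_nonneg zero_le_one).2 fun j => ?_
  have := AddCircle.norm_le_half_period 1 (x := x j) one_ne_zero
  norm_num at this
  linarith

end Torus

section Packing
open MeasureTheory Metric
open scoped ENNReal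

instance : IsProbabilityMeasure (volume : Measure UnitAddCircle) := ⟨UnitAddCircle.measure_univ⟩

lemma card_mul_pow_le_one_of_le_dist {n : ℕ} {ι : Type*} (s : Finset ι)
    (p : ι → Fin n → UnitAddCircle) {δ : ℝ} (hδ : 0 < δ) (hδ₁ : δ ≤ 1)
    (hp : (s : Set ι).Pairwise fun a b => δ ≤ dist (p a) (p b)) :
    (s.card : ℝ) * δ ^ n ≤ 1 := by
  have hdisj : (s : Set ι).PairwiseDisjoint fun a => ball (p a) (δ / 2) :=
    fun a ha b hb hab => ball_disjoint_ball (by linarith [hp ha hb hab])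
  have hball (x : UnitAddCircle) : volume (ball x (δ / 2)) = ENNReal.ofReal δ := by
    rw [← measure_congr AddCircle.closedBall_ae_eq_ball, AddCircle.volume_closedBall,
      mul_div_cancel₀ _ two_ne_zero, min_eq_right hδ₁]
  have hvol : (s.card : ℝ≥0∞) * ENNReal.ofReal δ ^ n ≤ 1 :=
    calc (s.card : ℝ≥0∞) * ENNReal.ofReal δ ^ n
        = volume (⋃ a ∈ s, ball (p a) (δ / 2)) := by
          rw [measure_biUnion_finset hdisj fun _ _ => measurableSet_ball]
          simp [volume_pi_ball _ (half_pos hδ), hball]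
      _ ≤ 1 := prob_le_one
  rwa [← ENNReal.ofReal_natCast, ← ENNReal.ofReal_pow hδ.le, ← ENNReal.ofReal_mul (by positivity),
    ENNReal.ofReal_le_one] at hvol

end Packing

section Periods
variable {n : ℕ} {ω : Fin n → ℝ}

lemma periods_succ_eq_sInf (ω : Fin n → ℝ) (i : ℕ) :
    periods ω (i + 1) =
      sInf {T : ℕ | 1 ≤ T ∧ ‖T • toTorus ω‖ < ‖periods ω i • toTorus ω‖} := by
  simp only [periods, distZ_natCast_mul_eq_norm_nsmul]

variable (hω : ¬ IsRationalVec ω)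
include hω

lemma exists_norm_nsmul_lt_norm_nsmul {T : ℕ} (hT : 0 < T) :
    ∃ d, 1 ≤ d ∧ ‖d • toTorus ω‖ < ‖T • toTorus ω‖ :=
  exists_pos_norm_nsmul_lt _ (norm_nsmul_toTorus_pos hω hT.ne')

lemma periods_pos : ∀ i, 0 < periods ω i
  | 0 => one_pos
  | i + 1 => by
    rw [periods_succ_eq_sInf]
    exact (Nat.sInf_mem (exists_norm_nsmul_lt_norm_nsmul hω (periods_pos i))).1

lemma isLeast_periods_succ (i : ℕ) :
    IsLeast {T : ℕ | 1 ≤ T ∧ ‖T • toTorus ω‖ < ‖periods ω i • toTorus ω‖}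
      (periods ω (i + 1)) := by
  rw [periods_succ_eq_sInf]
  exact ⟨Nat.sInf_mem (exists_norm_nsmul_lt_norm_nsmul hω (periods_pos hω i)),
    fun _ => Nat.sInf_le⟩

lemma norm_nsmul_periods_succ_lt (i : ℕ) :
    ‖periods ω (i + 1) • toTorus ω‖ < ‖periods ω i • toTorus ω‖ :=
  (isLeast_periods_succ hω i).1.2

lemma norm_nsmul_periods_le_of_lt_periods_succ (i : ℕ) {d : ℕ} (hd : 0 < d)
    (hdT : d < periods ω (i + 1)) : ‖periods ω i • toTorus ω‖ ≤ ‖d • toTorus ω‖ := by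
  by_contra! h
  exact hdT.not_ge ((isLeast_periods_succ hω i).2 ⟨hd, h⟩)

lemma periods_lt_periods_succ (i : ℕ) : periods ω i < periods ω (i + 1) := by
  by_contra! h
  obtain h | h := h.eq_or_lt
  · exact (norm_nsmul_periods_succ_lt hω i).ne (by rw [h])
  cases i with
  | zero => exact (periods_pos hω 1).ne' (by simpa [periods] using h)
  | succ i =>
    refine (norm_nsmul_periods_le_of_lt_periods_succ hω i (periods_pos hω _) h).not_gt ?_
    exact (norm_nsmul_periods_succ_lt hω (i + 1)).trans (norm_nsmul_periods_succ_lt hω i)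

lemma periods_succ_mul_norm_nsmul_periods_pow_le_one (i : ℕ) :
    (periods ω (i + 1) : ℝ) * ‖periods ω i • toTorus ω‖ ^ n ≤ 1 := by
  have hsep : ∀ a b, a < b → b < periods ω (i + 1) →
      ‖periods ω i • toTorus ω‖ ≤ dist (a • toTorus ω) (b • toTorus ω) := by
    intro a b hab hb
    rw [dist_comm, dist_eq_norm, sub_eq_add_neg, ← sub_nsmul _ hab.le]
    exact norm_nsmul_periods_le_of_lt_periods_succ hω i (Nat.sub_pos_of_lt hab) (by omega)
  simpa using card_mul_pow_le_one_of_le_dist (Finset.range (periods ω (i + 1)))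
    (fun a => a • toTorus ω) (norm_nsmul_toTorus_pos hω (periods_pos hω i).ne')
    (norm_pi_unitAddCircle_le_one _) fun a ha b hb hab => by
      simp only [Finset.coe_range, Set.mem_Iio] at ha hb
      obtain h | h := hab.lt_or_gt
      · exact hsep a b h hb
      · exact dist_comm (b • toTorus ω) _ ▸ hsep b a h ha

end Periods

theorem stmt17_general {n : ℕ} (hn : 1 ≤ n) (ω : Fin n → ℝ)
    (hirr : ¬ IsRationalVec ω)
    (w : ℕ → Fin n → ℤ)
    (hw : ∀ i, (supNorm fun j => (periods ω i : ℝ) * ω j - (w i j : ℝ)) =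
      distZ (fun j => (periods ω i : ℝ) * ω j))
    (k : Fin n → ℤ) (i : ℕ) (hi : 1 ≤ i)
    (hdiv : (periods ω (i - 1) : ℤ) ∣ ∑ j, k j * w (i - 1) j)
    (hndiv : ¬ (periods ω i : ℤ) ∣ ∑ j, k j * w i j) :
    Real.sqrt (∑ j, (k j : ℝ) ^ 2) ≥
      (periods ω (i - 1) : ℝ) /
        (2 * Real.sqrt n * (periods ω i : ℝ) ^ ((1 : ℝ) - 1 / (n : ℝ))) := by
  obtain ⟨i, rfl⟩ : ∃ m, i = m + 1 := ⟨i - 1, by omega⟩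
  rw [Nat.add_sub_cancel] at hdiv ⊢
  set T' := periods ω i
  set T := periods ω (i + 1)
  set δ' := ‖T' • toTorus ω‖
  have hTT' : (T' : ℝ) ≤ T := by exact_mod_cast (periods_lt_periods_succ hirr i).le
  have hT : (0 : ℝ) < T := by exact_mod_cast periods_pos hirr (i + 1)
  have hbound := natCast_le_sqrt_sum_sq_mul_of_dvd_of_not_dvd ω k (w i) (w (i + 1))
    (abs_natCast_mul_sub_le_of_supNorm_eq (hw i))
    (fun j => (abs_natCast_mul_sub_le_of_supNorm_eq (hw (i + 1)) j).trans
      (norm_nsmul_periods_succ_lt hirr i).le) hdiv hndiv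
  have hpacking : T * δ' ≤ T ^ (1 - 1 / (n : ℝ)) :=
    mul_le_rpow_one_sub_inv_of_mul_pow_le_one hT (norm_nonneg _) (by omega)
      (periods_succ_mul_norm_nsmul_periods_pow_le_one hirr i)
  rw [ge_iff_le, div_le_iff₀ (by positivity)]
  calc (T' : ℝ) ≤ √(∑ j, (k j : ℝ) ^ 2) * (√n * ((T + T') * δ')) := hbound
    _ ≤ √(∑ j, (k j : ℝ) ^ 2) * (√n * (2 * T ^ (1 - 1 / (n : ℝ)))) := by
        gcongr _ * (_ * ?_)
        nlinarith [norm_nonneg (T' • toTorus ω)]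
    _ = √(∑ j, (k j : ℝ) ^ 2) * (2 * √n * T ^ (1 - 1 / (n : ℝ))) := by ring

/-- the key lower bound `‖k‖ ≥ T_{i-1}/(2√n · T_i^{1-1/n})` on the
Euclidean norm of `k` when `⟨k, ω_{i-1}⟩ ∈ ℤ` but `⟨k, ω_i⟩ ∉ ℤ`. -/
theorem stmt17 {n : ℕ} (hn : 1 ≤ n) (ω : Fin n → ℝ)
    (hirr : ¬ IsRationalVec ω) (hres : ¬ Resonant ω)
    (w : ℕ → Fin n → ℤ)
    (hw : ∀ i, (supNorm fun j => (periods ω i : ℝ) * ω j - (w i j : ℝ)) =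
      distZ (fun j => (periods ω i : ℝ) * ω j))
    (k : Fin n → ℤ) (hk : k ≠ 0) (i : ℕ) (hi : 1 ≤ i)
    (hdiv : (periods ω (i - 1) : ℤ) ∣ ∑ j, k j * w (i - 1) j)
    (hndiv : ¬ (periods ω i : ℤ) ∣ ∑ j, k j * w i j) :
    Real.sqrt (∑ j, (k j : ℝ) ^ 2) ≥
      (periods ω (i - 1) : ℝ) /
        (2 * Real.sqrt n * (periods ω i : ℝ) ^ ((1 : ℝ) - 1 / (n : ℝ))) :=
  stmt17_general hn ω hirr w hw k i hi hdiv hndiv
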